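/- For every a ∈ (0,1), the function Ψ_a has exactly one zero in the open interval (0, j₁,₁), where j₁,₁ denotes the smallest positive zero of J₁; consequently, every positive zero of Ψ_a other than its smallest one is greater than j₁,₁. -/

import Mathlib

open Real

noncomputable section

/-- Bessel function of the first kind of order 0, via its power series. -/
def J0 (x : ℝ) : ℝ := ∑' k : ℕ, (-1 : ℝ) ^ k * (x / 2) ^ (2 * k) / ((k.factorial : ℝ)) ^ 2

/-- Bessel function of the first kind of order 1, via its power series. -/
def J1 (x : ℝ) : ℝ :=
  ∑' k : ℕ, (-1 : ℝ) ^ k * (x / 2) ^ (2 * k + 1) / ((k.factorial : ℝ) * ((k + 1).factorial : ℝ))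

/-- The transcendental function `Ψ_a(x) = J₀(x) + 2 log(a) x J₁(x)`. -/
def Psi (a x : ℝ) : ℝ := J0 x + 2 * Real.log a * x * J1 x

/-!
On `(0, j₁₁)` the function `x J₁(x)` is positive, so there `Ψ_a(x) = 0` iff
`J₀(x) / (x J₁(x)) = -2 log a`, a positive number. Since `J₀' = -J₁` and `(x J₁)' = x J₀`, this
ratio has derivative `-x (J₀² + J₁²) / (x J₁)²`, so it is strictly decreasing; it tends to `+∞` at
`0⁺` and is negative just below `j₁₁`, where `J₀ < 0`, so it takes the value `-2 log a` exactly
once. A zero of `Ψ_a` at or below `j₁₁` is therefore the smallest one, as `Ψ_a(j₁₁) = J₀(j₁₁) < 0`.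

The numerical input (`J₁ > 0` on `(0, 3]`, `J₁(4) < 0`, `J₀ < 0` on `[3, 4]`, whence
`3 < j₁₁ ≤ 4`) comes from truncating the alternating power series, whose terms decrease from the
second one on when `0 ≤ x ≤ 4`.
-/

open Filter Topology Set

section Alternating

variable {f : ℕ → ℝ}

lemma tsum_alternating_eq_sub (hf : Summable f) :
    ∑' i, (-1) ^ i * f i = f 0 - ∑' i, (-1) ^ i * f (i + 1) := by
  rw [hf.alternating.tsum_eq_zero_add, sub_eq_add_neg, ← tsum_neg]
  simp [pow_succ]

lemma tsum_alternating_le_sum_range_odd (hf : Summable f) (hfa : Antitone fun i => f (i + 1))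
    (k : ℕ) : ∑' i, (-1) ^ i * f i ≤ ∑ i ∈ Finset.range (2 * k + 1), (-1) ^ i * f i := by
  have htail := hfa.alternating_series_le_tendsto
    ((summable_nat_add_iff 1).2 hf).tendsto_alternating_series_tsum k
  rw [tsum_alternating_eq_sub hf, Finset.sum_range_succ']
  simp only [pow_succ, pow_zero, one_mul, mul_neg_one, neg_mul, Finset.sum_neg_distrib]
  linarith

lemma sum_range_even_le_tsum_alternating (hf : Summable f) (hfa : Antitone fun i => f (i + 1))
    (k : ℕ) : ∑ i ∈ Finset.range (2 * k + 2), (-1) ^ i * f i ≤ ∑' i, (-1) ^ i * f i := by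
  have htail := hfa.tendsto_le_alternating_series
    ((summable_nat_add_iff 1).2 hf).tendsto_alternating_series_tsum k
  rw [tsum_alternating_eq_sub hf, Finset.sum_range_succ']
  simp only [pow_succ, pow_zero, one_mul, mul_neg_one, neg_mul, Finset.sum_neg_distrib]
  linarith

end Alternating

def J0Term (x : ℝ) (k : ℕ) : ℝ := (x / 2) ^ (2 * k) / (k.factorial : ℝ) ^ 2

def J1Term (x : ℝ) (k : ℕ) : ℝ :=
  (x / 2) ^ (2 * k + 1) / ((k.factorial : ℝ) * ((k + 1).factorial : ℝ))

lemma J0_eq_tsum (x : ℝ) : J0 x = ∑' k, (-1) ^ k * J0Term x k := by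
  simp only [J0, J0Term, mul_div_assoc]

lemma J1_eq_tsum (x : ℝ) : J1 x = ∑' k, (-1) ^ k * J1Term x k := by
  simp only [J1, J1Term, mul_div_assoc]

lemma J0Term_zero (x : ℝ) : J0Term x 0 = 1 := by simp [J0Term]

lemma abs_J0Term_le {x R : ℝ} (hx : |x| ≤ R) (k : ℕ) :
    |J0Term x k| ≤ ((R / 2) ^ 2) ^ k / k.factorial := by
  have hk : (1 : ℝ) ≤ k.factorial := by exact_mod_cast k.factorial_pos
  have hxR : (x / 2) ^ 2 ≤ (R / 2) ^ 2 :=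
    sq_le_sq' (by linarith [(abs_le.1 hx).1]) (by linarith [(abs_le.1 hx).2])
  rw [J0Term, pow_mul, abs_of_nonneg (by positivity)]
  gcongr
  nlinarith

lemma abs_J1Term_le {x R : ℝ} (hx : |x| ≤ R) (k : ℕ) :
    |J1Term x k| ≤ R / 2 * ((R / 2) ^ 2) ^ k / k.factorial := by
  have hk : (1 : ℝ) ≤ (k + 1).factorial := by exact_mod_cast (k + 1).factorial_pos
  have hxR : (x / 2) ^ 2 ≤ (R / 2) ^ 2 :=
    sq_le_sq' (by linarith [(abs_le.1 hx).1]) (by linarith [(abs_le.1 hx).2])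
  have habs : |J1Term x k|
      = |x| / 2 * ((x / 2) ^ 2) ^ k / (k.factorial * (k + 1).factorial) := by
    rw [J1Term, abs_div, abs_of_pos (by positivity : (0 : ℝ) < k.factorial * (k + 1).factorial),
      pow_succ, pow_mul, abs_mul, abs_of_nonneg (by positivity : (0 : ℝ) ≤ ((x / 2) ^ 2) ^ k),
      abs_div, abs_two, mul_comm]
  have hR : 0 ≤ R / 2 := by linarith [abs_nonneg x]
  rw [habs]
  gcongr
  exact le_mul_of_one_le_right (by positivity) hk

lemma summable_mul_pow_div_factorial (C r : ℝ) :
    Summable fun n : ℕ => C * r ^ n / n.factorial := by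
  simpa only [mul_div_assoc] using (Real.summable_pow_div_factorial r).mul_left C

lemma summable_J0Term (x : ℝ) : Summable (J0Term x) :=
  .of_norm_bounded (Real.summable_pow_div_factorial _) (abs_J0Term_le le_rfl)

lemma summable_J1Term (x : ℝ) : Summable (J1Term x) :=
  .of_norm_bounded (summable_mul_pow_div_factorial _ _) (abs_J1Term_le le_rfl)

lemma J0_zero : J0 0 = 1 := by
  rw [J0_eq_tsum, tsum_alternating_eq_sub (summable_J0Term 0)]
  simp [J0Term]

lemma hasDerivAt_J0Term_succ (k : ℕ) (x : ℝ) :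
    HasDerivAt (fun y => J0Term y (k + 1)) (J1Term x k) x := by
  have h := (((hasDerivAt_id' x).div_const 2).fun_pow (2 * (k + 1))).div_const
    (((k + 1).factorial : ℝ) ^ 2)
  refine h.congr_deriv ?_
  rw [J1Term, Nat.factorial_succ, Nat.cast_mul, show 2 * (k + 1) - 1 = 2 * k + 1 by omega]
  field_simp
  push_cast
  ring

lemma hasDerivAt_mul_J1Term (k : ℕ) (x : ℝ) :
    HasDerivAt (fun y => y * J1Term y k) (x * J0Term x k) x := by
  have h := (hasDerivAt_id' x).fun_mul <|
    (((hasDerivAt_id' x).div_const 2).fun_pow (2 * k + 1)).div_const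
      ((k.factorial : ℝ) * ((k + 1).factorial : ℝ))
  refine h.congr_deriv ?_
  rw [J0Term, Nat.factorial_succ, Nat.cast_mul, show 2 * k + 1 - 1 = 2 * k by omega]
  field_simp
  push_cast
  ring

lemma hasDerivAt_tsum_of_locally_bounded_deriv {g g' : ℕ → ℝ → ℝ}
    (hg : ∀ n y, HasDerivAt (g n) (g' n y) y)
    (hg' : ∀ R, ∃ u : ℕ → ℝ, Summable u ∧ ∀ n y, |y| ≤ R → |g' n y| ≤ u n)
    (hg0 : Summable fun n => g n 0) (x : ℝ) :
    HasDerivAt (fun z => ∑' n, g n z) (∑' n, g' n x) x := by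
  obtain ⟨u, hu, hbound⟩ := hg' (|x| + 1)
  have hx : x ∈ Ioo (-(|x| + 1)) (|x| + 1) := by
    constructor <;> linarith [neg_abs_le x, le_abs_self x]
  have h0 : (0 : ℝ) ∈ Ioo (-(|x| + 1)) (|x| + 1) := by
    constructor <;> linarith [abs_nonneg x]
  exact hasDerivAt_tsum_of_isPreconnected hu isOpen_Ioo (convex_Ioo _ _).isPreconnected
    (fun n y _ => hg n y) (fun n y hy => hbound n y (abs_le.2 ⟨hy.1.le, hy.2.le⟩)) h0 hg0 hx

theorem hasDerivAt_J0 (x : ℝ) : HasDerivAt J0 (-J1 x) x := by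
  have hJ0 : J0 = fun y => 1 - ∑' k, (-1) ^ k * J0Term y (k + 1) := by
    funext y
    rw [J0_eq_tsum, tsum_alternating_eq_sub (summable_J0Term y), J0Term_zero]
  have htail := hasDerivAt_tsum_of_locally_bounded_deriv
    (g := fun k y => (-1) ^ k * J0Term y (k + 1)) (g' := fun k y => (-1) ^ k * J1Term y k)
    (fun k y => (hasDerivAt_J0Term_succ k y).const_mul _)
    (fun R => ⟨_, summable_mul_pow_div_factorial (R / 2) _, fun k y hy => by
      simpa only [abs_mul, abs_pow, abs_neg, abs_one, one_pow, one_mul] using abs_J1Term_le hy k⟩)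
    ((summable_nat_add_iff 1).2 (summable_J0Term 0)).alternating x
  rw [hJ0, J1_eq_tsum]
  exact htail.const_sub 1

theorem hasDerivAt_mul_J1 (x : ℝ) : HasDerivAt (fun y => y * J1 y) (x * J0 x) x := by
  have hmul (f : ℝ → ℕ → ℝ) (y : ℝ) :
      y * ∑' k, (-1) ^ k * f y k = ∑' k, (-1) ^ k * (y * f y k) := by
    rw [← tsum_mul_left]; congr 1; ext k; ring
  have hsum := hasDerivAt_tsum_of_locally_bounded_deriv
    (g := fun k y => (-1) ^ k * (y * J1Term y k)) (g' := fun k y => (-1) ^ k * (y * J0Term y k))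
    (fun k y => (hasDerivAt_mul_J1Term k y).const_mul _)
    (fun R => ⟨_, summable_mul_pow_div_factorial R _, fun k y hy => by
      simp only [abs_mul, abs_pow, abs_neg, abs_one, one_pow, one_mul, mul_div_assoc]
      exact mul_le_mul hy (abs_J0Term_le hy k) (abs_nonneg _) ((abs_nonneg y).trans hy)⟩)
    (by simp [summable_zero]) x
  simp only [J0_eq_tsum, J1_eq_tsum, hmul]
  exact hsum

lemma continuous_J0 : Continuous J0 :=
  continuous_iff_continuousAt.2 fun x => (hasDerivAt_J0 x).continuousAt

lemma continuous_mul_J1 : Continuous fun x => x * J1 x :=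
  continuous_iff_continuousAt.2 fun x => (hasDerivAt_mul_J1 x).continuousAt

lemma continuousOn_J1 : ContinuousOn J1 (Ioi 0) :=
  (continuous_mul_J1.continuousOn.div continuousOn_id fun _ (hx : 0 < _) => hx.ne').congr
    fun _ (hx : 0 < _) => (mul_div_cancel_left₀ _ hx.ne').symm

lemma J0Term_nonneg (x : ℝ) (k : ℕ) : 0 ≤ J0Term x k := by
  rw [J0Term, pow_mul]
  positivity

lemma J1Term_nonneg {x : ℝ} (hx : 0 ≤ x) (k : ℕ) : 0 ≤ J1Term x k :=
  div_nonneg (pow_nonneg (by linarith) _) (by positivity)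

lemma antitone_J0Term_succ {x : ℝ} (hx : |x| ≤ 4) :
    Antitone fun k => J0Term x (k + 1) := by
  refine antitone_nat_of_succ_le fun k => ?_
  have hstep : J0Term x (k + 2) = J0Term x (k + 1) * ((x / 2) ^ 2 / ((k : ℝ) + 2) ^ 2) := by
    simp only [J0Term, Nat.factorial_succ (k + 1), Nat.cast_mul, Nat.cast_add, Nat.cast_one,
      show 2 * (k + 2) = 2 * (k + 1) + 2 by ring, pow_add]
    field_simp
    ring
  refine hstep.trans_le (mul_le_of_le_one_right (J0Term_nonneg x _) ?_)
  rw [div_le_one (by positivity)]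
  have hk : (0 : ℝ) ≤ k := k.cast_nonneg
  nlinarith [sq_abs x, abs_nonneg x]

lemma antitone_J1Term_succ {x : ℝ} (hx0 : 0 ≤ x) (hx : x ≤ 4) :
    Antitone fun k => J1Term x (k + 1) := by
  refine antitone_nat_of_succ_le fun k => ?_
  have hstep : J1Term x (k + 2)
      = J1Term x (k + 1) * ((x / 2) ^ 2 / (((k : ℝ) + 2) * ((k : ℝ) + 3))) := by
    simp only [J1Term, Nat.factorial_succ (k + 1), Nat.factorial_succ (k + 2), Nat.cast_mul,
      Nat.cast_add, Nat.cast_one, show 2 * (k + 2) + 1 = 2 * (k + 1) + 1 + 2 by ring, pow_add]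
    field_simp
    push_cast
    ring
  refine hstep.trans_le (mul_le_of_le_one_right (J1Term_nonneg hx0 _) ?_)
  rw [div_le_one (by positivity)]
  have hk : (0 : ℝ) ≤ k := k.cast_nonneg
  nlinarith

lemma J1_pos_of_le_three {x : ℝ} (hx0 : 0 < x) (hx : x ≤ 3) : 0 < J1 x := by
  have h := sum_range_even_le_tsum_alternating (summable_J1Term x)
    (antitone_J1Term_succ hx0.le (by linarith)) 1
  have hsum : ∑ i ∈ Finset.range (2 * 1 + 2), (-1) ^ i * J1Term x i
      = x / 2 * (1 - (x / 2) ^ 2 / 2 + ((x / 2) ^ 2) ^ 2 / 12 - ((x / 2) ^ 2) ^ 3 / 144) := by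
    simp only [Finset.sum_range_succ, Finset.sum_range_zero, J1Term, Nat.factorial, Nat.cast_mul,
      Nat.cast_succ, Nat.cast_zero]
    ring
  have hu : (x / 2) ^ 2 ≤ 9 / 4 := by nlinarith
  have hpoly : 0 < 1 - (x / 2) ^ 2 / 2 + ((x / 2) ^ 2) ^ 2 / 12 - ((x / 2) ^ 2) ^ 3 / 144 := by
    nlinarith [sq_nonneg ((x / 2) ^ 2), sq_nonneg ((x / 2) ^ 2 - 3)]
  rw [← J1_eq_tsum, hsum] at h
  nlinarith

lemma J1_four_neg : J1 4 < 0 := by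
  have h := tsum_alternating_le_sum_range_odd (summable_J1Term 4)
    (antitone_J1Term_succ (by norm_num) le_rfl) 2
  have hsum : ∑ i ∈ Finset.range (2 * 2 + 1), (-1) ^ i * J1Term 4 i = -2 / 45 := by
    simp only [Finset.sum_range_succ, Finset.sum_range_zero, J1Term, Nat.factorial, Nat.cast_mul,
      Nat.cast_succ, Nat.cast_zero]
    norm_num
  rw [← J1_eq_tsum, hsum] at h
  exact h.trans_lt (by norm_num)

lemma J0_neg_of_mem_Icc {x : ℝ} (hx3 : 3 ≤ x) (hx4 : x ≤ 4) : J0 x < 0 := by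
  have h := tsum_alternating_le_sum_range_odd (summable_J0Term x)
    (antitone_J0Term_succ (abs_le.2 ⟨by linarith, hx4⟩)) 2
  have hsum : ∑ i ∈ Finset.range (2 * 2 + 1), (-1) ^ i * J0Term x i
      = 1 - (x / 2) ^ 2 + ((x / 2) ^ 2) ^ 2 / 4 - ((x / 2) ^ 2) ^ 3 / 36
        + ((x / 2) ^ 2) ^ 4 / 576 := by
    simp only [Finset.sum_range_succ, Finset.sum_range_zero, J0Term, Nat.factorial,
      Nat.cast_succ, Nat.cast_zero]
    ring
  have hu1 : 9 / 4 ≤ (x / 2) ^ 2 := by nlinarith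
  have hu2 : (x / 2) ^ 2 ≤ 4 := by nlinarith
  rw [← J0_eq_tsum, hsum] at h
  set u := (x / 2) ^ 2
  nlinarith [mul_nonneg (sub_nonneg.2 hu1) (sub_nonneg.2 hu2), sq_nonneg (u - 3),
    mul_nonneg (mul_nonneg (sub_nonneg.2 hu1) (sub_nonneg.2 hu2)) (sub_nonneg.2 hu2)]

lemma exists_J1_eq_zero_mem_Icc : ∃ x ∈ Icc (3 : ℝ) 4, J1 x = 0 :=
  intermediate_value_Icc' (by norm_num) (continuousOn_J1.mono fun _ hx => by
      simp only [mem_Ioi]; linarith [hx.1])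
    ⟨J1_four_neg.le, (J1_pos_of_le_three (by norm_num) le_rfl).le⟩

def j₁₁ : ℝ := sInf {x : ℝ | 0 < x ∧ J1 x = 0}

lemma isLeast_j₁₁ : IsLeast {x : ℝ | 0 < x ∧ J1 x = 0} j₁₁ := by
  have hS : {x : ℝ | 0 < x ∧ J1 x = 0} = Ici 3 ∩ J1 ⁻¹' {0} := by
    ext x
    constructor
    · rintro ⟨hx0, hx⟩
      exact ⟨not_lt.1 fun h => (J1_pos_of_le_three hx0 h.le).ne' hx, hx⟩
    · rintro ⟨hx3, hx⟩
      exact ⟨by linarith [mem_Ici.1 hx3], hx⟩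
  have hclosed : IsClosed (Ici (3 : ℝ) ∩ J1 ⁻¹' {0}) :=
    (continuousOn_J1.mono fun _ hx => by simp only [mem_Ioi]; linarith [mem_Ici.1 hx])
      |>.preimage_isClosed_of_isClosed isClosed_Ici isClosed_singleton
  obtain ⟨x, hx, hJ1x⟩ := exists_J1_eq_zero_mem_Icc
  rw [j₁₁, hS]
  exact hclosed.isLeast_csInf ⟨x, hx.1, hJ1x⟩ ⟨3, fun _ hy => hy.1⟩

lemma j₁₁_mem_Ioc : j₁₁ ∈ Ioc (3 : ℝ) 4 := by
  obtain ⟨⟨hpos, hzero⟩, hle⟩ := isLeast_j₁₁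
  obtain ⟨x, hx, hJ1x⟩ := exists_J1_eq_zero_mem_Icc
  exact ⟨not_le.1 fun h => (J1_pos_of_le_three hpos h).ne' hzero,
    (hle ⟨by linarith [hx.1], hJ1x⟩).trans hx.2⟩

lemma J1_pos_of_lt_j₁₁ {x : ℝ} (hx0 : 0 < x) (hx : x < j₁₁) : 0 < J1 x := by
  by_contra! hneg
  have hx3 : 3 < x := not_le.1 fun h => (J1_pos_of_le_three hx0 h).not_ge hneg
  obtain ⟨z, hz, hJ1z⟩ := intermediate_value_Icc' hx3.le
    (continuousOn_J1.mono fun _ hy => by simp only [mem_Ioi]; linarith [hy.1])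
    ⟨hneg, (J1_pos_of_le_three (by norm_num) le_rfl).le⟩
  linarith [isLeast_j₁₁.2 ⟨by linarith [hz.1], hJ1z⟩, hz.2]

lemma j₁₁_pos : 0 < j₁₁ := isLeast_j₁₁.1.1

lemma mul_J1_pos_of_mem_Ioo {x : ℝ} (hx : x ∈ Ioo 0 j₁₁) : 0 < x * J1 x :=
  mul_pos hx.1 (J1_pos_of_lt_j₁₁ hx.1 hx.2)

lemma hasDerivAt_J0_div_mul_J1 {x : ℝ} (hx : x ∈ Ioo 0 j₁₁) :
    HasDerivAt (fun y => J0 y / (y * J1 y))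
      (-(x * (J0 x ^ 2 + J1 x ^ 2)) / (x * J1 x) ^ 2) x :=
  ((hasDerivAt_J0 x).div (hasDerivAt_mul_J1 x) (mul_J1_pos_of_mem_Ioo hx).ne').congr_deriv
    (by ring)

lemma continuousOn_J0_div_mul_J1 : ContinuousOn (fun x => J0 x / (x * J1 x)) (Ioo 0 j₁₁) :=
  fun _ hx => (hasDerivAt_J0_div_mul_J1 hx).continuousAt.continuousWithinAt

lemma strictAntiOn_J0_div_mul_J1 : StrictAntiOn (fun x => J0 x / (x * J1 x)) (Ioo 0 j₁₁) := by
  refine strictAntiOn_of_hasDerivWithinAt_neg (convex_Ioo 0 j₁₁) continuousOn_J0_div_mul_J1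
    (f' := fun x => -(x * (J0 x ^ 2 + J1 x ^ 2)) / (x * J1 x) ^ 2)
    (fun x hx => ?_) fun x hx => ?_ <;> rw [interior_Ioo] at hx
  · exact (hasDerivAt_J0_div_mul_J1 hx).hasDerivWithinAt
  · have hsq : 0 < J0 x ^ 2 + J1 x ^ 2 := by positivity [J1_pos_of_lt_j₁₁ hx.1 hx.2]
    exact div_neg_of_neg_of_pos (neg_neg_of_pos (mul_pos hx.1 hsq))
      (pow_pos (mul_J1_pos_of_mem_Ioo hx) 2)

lemma tendsto_J0_div_mul_J1_nhdsGT_zero :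
    Tendsto (fun x => J0 x / (x * J1 x)) (𝓝[>] 0) atTop := by
  have hJ0 : Tendsto J0 (𝓝[>] 0) (𝓝 1) :=
    J0_zero ▸ continuous_J0.continuousAt.tendsto.mono_left nhdsWithin_le_nhds
  have hmul : Tendsto (fun x => x * J1 x) (𝓝[>] 0) (𝓝[>] 0) := by
    refine tendsto_nhdsWithin_iff.2 ⟨?_, ?_⟩
    · simpa using continuous_mul_J1.continuousAt.tendsto.mono_left (nhdsWithin_le_nhds (a := 0))
    · filter_upwards [Ioo_mem_nhdsGT j₁₁_pos] with x hx using mul_J1_pos_of_mem_Ioo hx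
  exact (hJ0.pos_mul_atTop one_pos (tendsto_inv_nhdsGT_zero.comp hmul)).congr
    fun x => (div_eq_mul_inv _ _).symm

theorem existsUnique_J0_eq_mul_mul_J1 {c : ℝ} (hc : 0 < c) :
    ∃! x, x ∈ Ioo 0 j₁₁ ∧ J0 x = c * (x * J1 x) := by
  set g := fun x => J0 x / (x * J1 x)
  have hiff : ∀ x ∈ Ioo 0 j₁₁, J0 x = c * (x * J1 x) ↔ g x = c := fun x hx =>
    (div_eq_iff (mul_J1_pos_of_mem_Ioo hx).ne').symm
  obtain ⟨x₁, hgx₁, hx₁⟩ :=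
    ((tendsto_J0_div_mul_J1_nhdsGT_zero.eventually_gt_atTop c).and
      (Ioo_mem_nhdsGT j₁₁_pos)).exists
  have hx₂ : (3 + j₁₁) / 2 ∈ Ioo 0 j₁₁ := by
    constructor <;> linarith [j₁₁_mem_Ioc.1]
  have hgx₂ : g ((3 + j₁₁) / 2) < c :=
    (div_neg_of_neg_of_pos (J0_neg_of_mem_Icc (by linarith [j₁₁_mem_Ioc.1])
      (by linarith [j₁₁_mem_Ioc.2])) (mul_J1_pos_of_mem_Ioo hx₂)).trans hc
  obtain ⟨x₀, hx₀, hgx₀⟩ := isPreconnected_Ioo.intermediate_value hx₂ hx₁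
    continuousOn_J0_div_mul_J1 ⟨hgx₂.le, hgx₁.le⟩
  exact ⟨x₀, ⟨hx₀, (hiff x₀ hx₀).2 hgx₀⟩, fun y ⟨hy, hJy⟩ =>
    strictAntiOn_J0_div_mul_J1.injOn hy hx₀ (((hiff y hy).1 hJy).trans hgx₀.symm)⟩

lemma lt_of_mem_of_not_isLeast {α : Type*} [LinearOrder α] {S : Set α} {j x : α} (hx : x ∈ S)
    (hleast : ¬IsLeast S x) (hj : j ∉ S) (hS : (S ∩ Iio j).Subsingleton) : j < x := by
  by_contra! hxj
  have hxj : x < j := hxj.lt_of_ne fun h => hj (h ▸ hx)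
  exact hleast ⟨hx, fun y hy => not_lt.1 fun hyx => hyx.ne (hS ⟨hy, hyx.trans hxj⟩ ⟨hx, hxj⟩)⟩

/-- For every `a ∈ (0,1)`, `Ψ_a` has exactly one zero in `(0, j₁,₁)`, where `j₁,₁` is the
smallest positive zero of `J₁`; consequently, every positive zero of `Ψ_a` other than its
smallest one is greater than `j₁,₁`. -/
theorem unique_zero_Psi_below_first_J1_zero :
    ∃ j11 : ℝ, IsLeast {x : ℝ | 0 < x ∧ J1 x = 0} j11 ∧
      ∀ a ∈ Set.Ioo (0 : ℝ) 1,
        (∃! x : ℝ, x ∈ Set.Ioo 0 j11 ∧ Psi a x = 0) ∧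
        ∀ x : ℝ, 0 < x → Psi a x = 0 →
          ¬ IsLeast {y : ℝ | 0 < y ∧ Psi a y = 0} x → j11 < x := by
  refine ⟨j₁₁, isLeast_j₁₁, fun a ha => ?_⟩
  have hPsi (x : ℝ) : Psi a x = 0 ↔ J0 x = -2 * log a * (x * J1 x) := by
    rw [Psi]
    constructor <;> intro h <;> linarith
  have huniq : ∃! x, x ∈ Ioo 0 j₁₁ ∧ Psi a x = 0 := by
    simpa only [hPsi] using existsUnique_J0_eq_mul_mul_J1 (by linarith [log_neg ha.1 ha.2])
  have hPsi_j₁₁ : Psi a j₁₁ = J0 j₁₁ := by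
    rw [Psi, isLeast_j₁₁.1.2]
    ring
  refine ⟨huniq, fun x hx0 hx hleast => lt_of_mem_of_not_isLeast
    (S := {y | 0 < y ∧ Psi a y = 0}) ⟨hx0, hx⟩ hleast ?_ ?_⟩
  · rintro ⟨-, hzero⟩
    exact (J0_neg_of_mem_Icc j₁₁_mem_Ioc.1.le j₁₁_mem_Ioc.2).ne (hPsi_j₁₁ ▸ hzero)
  · rintro y ⟨⟨hy0, hy⟩, hyj⟩ z ⟨⟨hz0, hz⟩, hzj⟩
    exact huniq.unique ⟨⟨hy0, hyj⟩, hy⟩ ⟨⟨hz0, hzj⟩, hz⟩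

end
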